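/- Let K, L, M, N be nonnegative integers with K ≤ M+N and N ≤ K+L, and let (l_T,t,r_T;r_B,b,l_B) be a sextuple of 01-words of lengths (K,L,M;N,K+L−N,M+N−K). If h⃗^{r_B,b,l_B}_{l_T,t,r_T} > 0, then l_T t ≤ b r_B and t r_T ≤ l_B b for the concatenations l_T t, b r_B, t r_T and l_B b. -/

import Mathlib

open scoped Classical

namespace HFPLpaper2014

noncomputable section

/-! ### 01-words.  `true` represents the letter 1, `false` the letter 0. -/

abbrev Word := List Bool

/-- `|ω|₁`, the number of occurrences of the letter 1. -/
def c1 (w : Word) : ℕ := w.count true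

/-- `|ω|₀`, the number of occurrences of the letter 0. -/
def c0 (w : Word) : ℕ := w.count false

/-- `d(ω)`, the number of inversions of `ω`, i.e. of pairs `k < ℓ` with
`ω_k = 1` and `ω_ℓ = 0`. -/
def dinv : Word → ℕ
  | [] => 0
  | x :: xs => (if x = true then xs.count false else 0) + dinv xs

/-- The dominance order `ω ≤ σ` on 01-words: every prefix of `ω` contains at most as
many ones as the corresponding prefix of `σ`. -/
def wordLE (u v : Word) : Prop :=
  ∀ m : ℕ, (u.take m).count true ≤ (v.take m).count true

/-- the complement `ω̄` of a word -/
def wbar (w : Word) : Word := w.map (fun x => !x)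

/-- `ω* = reverse of the complement` of a word -/
def wstar (w : Word) : Word := (w.map (fun x => !x)).reverse
/-! ### The graph `H^{K,L,M,N}`, hexagonal fully packed loop configurations and
their oriented versions. -/

/-- vertices of the square lattice -/
abbrev V : Type := ℤ × ℤ

/-- The vertex set of the graph `H^{K,L,M,N}`. -/
def inH (K L M N : ℕ) (p : V) : Prop :=
  p.2 ≤ p.1 ∧ p.2 ≤ (K : ℤ) - 1 ∧ p.2 ≤ -p.1 + 2 * ((K : ℤ) + L) ∧
  -p.1 - 1 ≤ p.2 ∧ (K : ℤ) - M - N ≤ p.2 ∧ p.1 - 2 * ((M : ℤ) + L) - 1 ≤ p.2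

/-- adjacency in the square lattice `ℤ²` -/
def latAdj (p q : V) : Prop :=
  (p.1 = q.1 ∧ (p.2 = q.2 + 1 ∨ q.2 = p.2 + 1)) ∨
  (p.2 = q.2 ∧ (p.1 = q.1 + 1 ∨ q.1 = p.1 + 1))

/-- `L_{T,i+1}`, the leftmost vertex of the `(i+1)`-st (counted from the bottom of the
top `K` rows) row, `0 ≤ i < K`; numbered from left to right. -/
def LTv (i : ℕ) : V := ((i : ℤ), (i : ℤ))

/-- `T_{i+1}`, the odd vertices of the top row, `0 ≤ i < L`. -/
def TTv (K : ℕ) (i : ℕ) : V := ((K : ℤ) + 1 + 2 * i, (K : ℤ) - 1)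

/-- `R_{T,i+1}`, the rightmost vertices of the top `M` rows, `0 ≤ i < M`. -/
def RTv (K L : ℕ) (i : ℕ) : V := ((K : ℤ) + 2 * L + 1 + i, (K : ℤ) - 1 - i)

/-- `L_{B,i+1}`, the leftmost vertices of the bottom `M+N-K` rows, `0 ≤ i < M+N-K`. -/
def LBv (i : ℕ) : V := ((i : ℤ), -(i : ℤ) - 1)

/-- `B_{i+1}`, the even vertices of the bottom row, `0 ≤ i < K+L-N`. -/
def BBv (K M N : ℕ) (i : ℕ) : V := ((M : ℤ) + N - K + 1 + 2 * i, (K : ℤ) - M - N)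

/-- `R_{B,i+1}`, the rightmost vertices of the bottom `N` rows, `0 ≤ i < N`. -/
def RBv (K L M N : ℕ) (i : ℕ) : V := ((M : ℤ) + 2 * L + K - N + 1 + i, (K : ℤ) - M - N + i)

def inLT (K : ℕ) (p : V) : Prop := ∃ i, i < K ∧ p = LTv i
def inTT (K L : ℕ) (p : V) : Prop := ∃ i, i < L ∧ p = TTv K i
def inRT (K L M : ℕ) (p : V) : Prop := ∃ i, i < M ∧ p = RTv K L i
def inLB (K M N : ℕ) (p : V) : Prop := ∃ i, i < M + N - K ∧ p = LBv i
def inBB (K L M N : ℕ) (p : V) : Prop := ∃ i, i < K + L - N ∧ p = BBv K M N i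
def inRB (K L M N : ℕ) (p : V) : Prop := ∃ i, i < N ∧ p = RBv K L M N i

/-- `𝓛_T ∪ 𝓛_B ∪ 𝓡_T ∪ 𝓡_B` -/
def inLRset (K L M N : ℕ) (p : V) : Prop :=
  inLT K p ∨ inLB K M N p ∨ inRT K L M p ∨ inRB K L M N p

/-- `𝓣 ∪ 𝓑` -/
def inTBset (K L M N : ℕ) (p : V) : Prop := inTT K L p ∨ inBB K L M N p

/-- `𝓛_T ∪ 𝓛_B` -/
def inLeft (K M N : ℕ) (p : V) : Prop := inLT K p ∨ inLB K M N p

/-- `𝓡_T ∪ 𝓡_B` -/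
def inRight (K L M N : ℕ) (p : V) : Prop := inRT K L M p ∨ inRB K L M N p

/-- The degree of a vertex `v` in a graph all of whose edges join lattice
neighbours. -/
def ndeg (A : V → V → Prop) (v : V) : ℕ :=
  (({(v.1 + 1, v.2), (v.1 - 1, v.2), (v.1, v.2 + 1), (v.1, v.2 - 1)} : Finset V).filter
    (fun w => A v w)).card

/-- A hexagonal fully packed loop configuration (HFPL) of size `(K,L,M,N)`. -/
structure HFPL (K L M N : ℕ) where
  Adj : V → V → Prop
  symm : ∀ v w, Adj v w → Adj w v
  valid : ∀ v w, Adj v w → inH K L M N v ∧ inH K L M N w ∧ latAdj v w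
  degLR : ∀ v, inLRset K L M N v → ndeg Adj v ≤ 1
  degTB : ∀ v, inTBset K L M N v → ndeg Adj v = 1
  degIn : ∀ v, inH K L M N v → ¬ inLRset K L M N v → ¬ inTBset K L M N v → ndeg Adj v = 2
  noLL : ∀ v w, inLeft K M N v → inLeft K M N w → v ≠ w → ¬ Relation.ReflTransGen Adj v w
  noRR : ∀ v w, inRight K L M N v → inRight K L M N w → v ≠ w → ¬ Relation.ReflTransGen Adj v w

/-- The boundary `(l_T,t,r_T;r_B,b,l_B)` of an HFPL. -/
def Boundary {K L M N : ℕ} (f : HFPL K L M N) (lT t rT rB b lB : Word) : Prop :=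
  (∀ i, i < K → (lT.getD i false = true ↔ ndeg f.Adj (LTv i) = 1)) ∧
  (∀ i, i < L → (t.getD i false = false ↔
     ((∃ w, (inLT K w ∨ inLB K M N w ∨ inBB K L M N w) ∧
        Relation.ReflTransGen f.Adj (TTv K i) w) ∨
      (∃ h, h < i ∧ Relation.ReflTransGen f.Adj (TTv K i) (TTv K h))))) ∧
  (∀ i, i < M → (rT.getD i false = false ↔ ndeg f.Adj (RTv K L i) = 1)) ∧
  (∀ i, i < N → (rB.getD i false = true ↔ ndeg f.Adj (RBv K L M N i) = 1)) ∧
  (∀ i, i < K + L - N → (b.getD i false = false ↔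
     ((∃ w, (inRT K L M w ∨ inRB K L M N w ∨ inTT K L w) ∧
        Relation.ReflTransGen f.Adj (BBv K M N i) w) ∨
      (∃ j, j < K + L - N ∧ i < j ∧
        Relation.ReflTransGen f.Adj (BBv K M N i) (BBv K M N j))))) ∧
  (∀ i, i < M + N - K → (lB.getD i false = false ↔ ndeg f.Adj (LBv i) = 1))

/-- `h^{r_B,b,l_B}_{l_T,t,r_T}`, the number of HFPLs with given boundary. -/
def hord (K L M N : ℕ) (lT t rT rB b lB : Word) : ℕ :=
  Nat.card {f : HFPL K L M N // Boundary f lT t rT rB b lB}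

/-- the undirected graph underlying a directed graph -/
def UAdj (E : V → V → Prop) : V → V → Prop := fun v w => E v w ∨ E w v

def outdeg (E : V → V → Prop) (v : V) : ℕ := ndeg E v
def indeg (E : V → V → Prop) (v : V) : ℕ := ndeg (fun x y => E y x) v

/-- An oriented HFPL of size `(K,L,M,N)`: an HFPL together with an orientation of
each edge such that every degree-2 vertex is incident to one incoming and one
outgoing edge, every edge attached to a vertex of `𝓛_T ∪ 𝓛_B` is outgoing and
every edge attached to a vertex of `𝓡_T ∪ 𝓡_B` is incoming. -/
structure OHFPL (K L M N : ℕ) where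
  E : V → V → Prop
  antisymm : ∀ v w, E v w → ¬ E w v
  valid : ∀ v w, E v w → inH K L M N v ∧ inH K L M N w ∧ latAdj v w
  degLR : ∀ v, inLRset K L M N v → ndeg (UAdj E) v ≤ 1
  degTB : ∀ v, inTBset K L M N v → ndeg (UAdj E) v = 1
  degIn : ∀ v, inH K L M N v → ¬ inLRset K L M N v → ¬ inTBset K L M N v →
    ndeg (UAdj E) v = 2
  noLL : ∀ v w, inLeft K M N v → inLeft K M N w → v ≠ w →
    ¬ Relation.ReflTransGen (UAdj E) v w
  noRR : ∀ v w, inRight K L M N v → inRight K L M N w → v ≠ w →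
    ¬ Relation.ReflTransGen (UAdj E) v w
  flow : ∀ v, ndeg (UAdj E) v = 2 → indeg E v = 1 ∧ outdeg E v = 1
  outL : ∀ v, inLeft K M N v → ∀ w, ¬ E w v
  inRt : ∀ v, inRight K L M N v → ∀ w, ¬ E v w

/-- The boundary `(l_T,t,r_T;r_B,b,l_B)` of an oriented HFPL. -/
def OBoundary {K L M N : ℕ} (f : OHFPL K L M N) (lT t rT rB b lB : Word) : Prop :=
  (∀ i, i < K → (lT.getD i false = true ↔ outdeg f.E (LTv i) = 1)) ∧
  (∀ i, i < L → (t.getD i false = false ↔ indeg f.E (TTv K i) = 1)) ∧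
  (∀ i, i < M → (rT.getD i false = false ↔ indeg f.E (RTv K L i) = 1)) ∧
  (∀ i, i < N → (rB.getD i false = true ↔ indeg f.E (RBv K L M N i) = 1)) ∧
  (∀ i, i < K + L - N → (b.getD i false = true ↔ indeg f.E (BBv K M N i) = 1)) ∧
  (∀ i, i < M + N - K → (lB.getD i false = false ↔ outdeg f.E (LBv i) = 1))

/-- `h⃗^{r_B,b,l_B}_{l_T,t,r_T}`, the number of oriented HFPLs with given boundary. -/
def hvec (K L M N : ℕ) (lT t rT rB b lB : Word) : ℕ :=
  Nat.card {f : OHFPL K L M N // OBoundary f lT t rT rB b lB}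

/-!
Colour the lattice by the parity of `x + y` and fix a prefix length `m`. Every edge leaving a
vertex with `x + y` even and `x + y ≤ 2m - 2` ends at a vertex with `x + y` odd and
`x + y ≤ 2m - 1`, so the out-degrees on the first set sum to at most the in-degrees on the second.
Non-distinguished vertices have in- and out-degree one, and the vertical shift
`(x, y) ↦ (x, y - 1)` matches the non-distinguished vertices of the two sets. What is left are
distinguished vertices, whose degrees are letters of the boundary: the first set contributes the
ones among the first `m` letters of `l_T t`, the second those among the first `m` letters of
`b r_B` (its vertices in `𝓛_B` have in-degree zero). This is the `m`-th prefix inequality of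
`l_T t ≤ b r_B`. The second inequality is the same argument for `x - y`, counting zeros.
-/

section Words

theorem count_take_eq_sum (w : Word) (c : Bool) (m : ℕ) :
    (w.take m).count c =
      ∑ i ∈ Finset.range (min m w.length), if w.getD i false = c then 1 else 0 := by
  induction w generalizing m with
  | nil => simp
  | cons x l ih =>
    cases m with
    | zero => simp
    | succ n =>
      rw [List.take_succ_cons, List.count_cons, List.length_cons, Nat.succ_min_succ,
        Finset.sum_range_succ', ih n]
      by_cases h : x = c <;> simp [h]

theorem sum_range_eq_count_take {n : ℕ} {w : Word} (hw : w.length = n) (c : Bool) {g : ℕ → ℕ}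
    (hg : ∀ i < n, g i = if w.getD i false = c then 1 else 0) (m : ℕ) :
    ∑ i ∈ Finset.range (min m n), g i = (w.take m).count c := by
  rw [count_take_eq_sum, hw]
  exact Finset.sum_congr rfl fun i hi => hg i (by simp at hi; omega)

theorem wordLE_of_forall_le_length {u v : Word} (hlen : u.length = v.length)
    (h : ∀ m ≤ u.length, (u.take m).count true ≤ (v.take m).count true) : wordLE u v := by
  intro m
  rcases le_total m u.length with hm | hm
  · exact h m hm
  · rw [List.take_of_length_le hm, List.take_of_length_le (hlen ▸ hm)]
    have := h u.length le_rfl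
    rwa [List.take_of_length_le le_rfl, List.take_of_length_le hlen.ge] at this

theorem wordLE_of_forall_count_false_le {u v : Word} (hlen : u.length = v.length)
    (h : ∀ m ≤ u.length, (v.take m).count false ≤ (u.take m).count false) : wordLE u v := by
  refine wordLE_of_forall_le_length hlen fun m hm => ?_
  have hu := List.count_true_add_count_false (u.take m)
  have hv := List.count_true_add_count_false (v.take m)
  simp only [List.length_take, hlen] at hu hv
  have := h m hm
  omega

end Words

section FilteredSums

variable {α : Type*} {s : Finset α} {g : α → ℕ}

theorem sum_filter_eq_add_of_iff_or {p a b : α → Prop} [DecidablePred p] [DecidablePred a]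
    [DecidablePred b] (hp : ∀ x, p x ↔ a x ∨ b x) (hab : ∀ x, a x → ¬ b x) :
    ∑ x ∈ s.filter p, g x = ∑ x ∈ s.filter a, g x + ∑ x ∈ s.filter b, g x := by
  rw [Finset.filter_congr fun x _ => hp x, Finset.filter_or,
    Finset.sum_union (Finset.disjoint_filter.2 fun x _ => hab x)]

theorem sum_filter_exists_eq_sum_range [DecidableEq α] {vtx : ℕ → α} (hinj : vtx.Injective)
    {r : ℕ} (hg : ∀ x ∉ s, g x = 0) :
    ∑ x ∈ s.filter (fun x => ∃ i < r, x = vtx i), g x = ∑ i ∈ Finset.range r, g (vtx i) := by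
  rw [← Finset.sum_image hinj.injOn]
  refine Finset.sum_subset (fun x hx => ?_) fun x hx hxs => hg x fun hs => hxs ?_
  · obtain ⟨i, hi, rfl⟩ := (Finset.mem_filter.1 hx).2
    exact Finset.mem_image_of_mem vtx (Finset.mem_range.2 hi)
  · obtain ⟨i, hi, rfl⟩ := Finset.mem_image.1 hx
    exact Finset.mem_filter.2 ⟨hs, i, Finset.mem_range.1 hi, rfl⟩

end FilteredSums

section Lattice

theorem latAdj_symm {v w : V} (h : latAdj v w) : latAdj w v := by
  unfold latAdj at *
  omega

theorem mem_neighbors_of_latAdj {v w : V} (h : latAdj v w) :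
    w ∈ ({(v.1 + 1, v.2), (v.1 - 1, v.2), (v.1, v.2 + 1), (v.1, v.2 - 1)} : Finset V) := by
  obtain ⟨a, b⟩ := v
  obtain ⟨c, d⟩ := w
  simp only [latAdj] at h
  simp only [Finset.mem_insert, Finset.mem_singleton, Prod.mk.injEq]
  omega

theorem ndeg_eq_zero {A : V → V → Prop} {v : V} (h : ∀ w, ¬ A v w) : ndeg A v = 0 :=
  Finset.card_eq_zero.2 (Finset.filter_eq_empty_iff.2 fun w _ => h w)

theorem ndeg_eq_card_filter {A : V → V → Prop} {S : Finset V} {v : V}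
    (hA : ∀ w, A v w → w ∈ S ∧ latAdj v w) : ndeg A v = (S.filter (A v)).card := by
  unfold ndeg
  congr 1
  ext w
  simp only [Finset.mem_filter]
  exact ⟨fun h => ⟨(hA w h.2).1, h.2⟩, fun h => ⟨mem_neighbors_of_latAdj (hA w h.2).2, h.2⟩⟩

theorem sum_outdeg_filter_le_sum_indeg_filter {E : V → V → Prop} {S : Finset V}
    (hE : ∀ v w, E v w → v ∈ S ∧ w ∈ S ∧ latAdj v w) {P Q : V → Prop}
    (hQP : ∀ v w, E v w → Q v → P w) :
    ∑ v ∈ S.filter Q, outdeg E v ≤ ∑ w ∈ S.filter P, indeg E w := by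
  have hout : ∀ v, outdeg E v = (S.filter (E v)).card := fun v =>
    ndeg_eq_card_filter fun w h => ⟨(hE v w h).2.1, (hE v w h).2.2⟩
  have hin : ∀ w, indeg E w = (S.filter (E · w)).card := fun w =>
    ndeg_eq_card_filter fun v h => ⟨(hE v w h).1, latAdj_symm (hE v w h).2.2⟩
  calc ∑ v ∈ S.filter Q, outdeg E v
      = ∑ w ∈ S, ((S.filter Q).filter (E · w)).card := by
        simp only [hout]
        exact Finset.sum_card_bipartiteAbove_eq_sum_card_bipartiteBelow E
    _ = ∑ w ∈ S.filter P, ((S.filter Q).filter (E · w)).card := by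
        refine (Finset.sum_filter_of_ne fun w _ hw => ?_).symm
        obtain ⟨v, hv⟩ := Finset.card_ne_zero.1 hw
        simp only [Finset.mem_filter] at hv
        exact hQP v w hv.2 hv.1.2
    _ ≤ ∑ w ∈ S.filter P, indeg E w := by
        simp only [hin]
        exact Finset.sum_le_sum fun w _ => Finset.card_le_card (Finset.filter_subset_filter _
          (Finset.filter_subset _ _))

end Lattice

section Vertices

theorem exists_eq_LTv_iff {r : ℕ} {v : V} :
    (∃ i < r, v = LTv i) ↔ v.2 = v.1 ∧ 0 ≤ v.1 ∧ v.1 < r := by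
  constructor
  · rintro ⟨i, hi, rfl⟩
    simp only [LTv, true_and]
    omega
  · rintro ⟨h1, h2, h3⟩
    exact ⟨v.1.toNat, by omega, Prod.ext (by simp [LTv]; omega) (by simp [LTv]; omega)⟩

theorem exists_eq_TTv_iff {K r : ℕ} {v : V} :
    (∃ i < r, v = TTv K i) ↔
      v.2 = K - 1 ∧ K + 1 ≤ v.1 ∧ v.1 < K + 1 + 2 * r ∧ 2 ∣ v.1 - K - 1 := by
  constructor
  · rintro ⟨i, hi, rfl⟩
    simp only [TTv, true_and]
    omega
  · rintro ⟨h1, h2, h3, h4⟩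
    exact ⟨((v.1 - K - 1) / 2).toNat, by omega,
      Prod.ext (by simp [TTv]; omega) (by simp [TTv]; omega)⟩

theorem exists_eq_RTv_iff {K L r : ℕ} {v : V} :
    (∃ i < r, v = RTv K L i) ↔ v.1 + v.2 = 2 * K + 2 * L ∧ K - r ≤ v.2 ∧ v.2 ≤ K - 1 := by
  constructor
  · rintro ⟨i, hi, rfl⟩
    simp only [RTv]
    omega
  · rintro ⟨h1, h2, h3⟩
    exact ⟨(K - 1 - v.2).toNat, by omega, Prod.ext (by simp [RTv]; omega) (by simp [RTv]; omega)⟩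

theorem exists_eq_LBv_iff {r : ℕ} {v : V} :
    (∃ i < r, v = LBv i) ↔ v.2 = -v.1 - 1 ∧ 0 ≤ v.1 ∧ v.1 < r := by
  constructor
  · rintro ⟨i, hi, rfl⟩
    simp only [LBv, true_and]
    omega
  · rintro ⟨h1, h2, h3⟩
    exact ⟨v.1.toNat, by omega, Prod.ext (by simp [LBv]; omega) (by simp [LBv]; omega)⟩

theorem exists_eq_BBv_iff {K M N r : ℕ} {v : V} :
    (∃ i < r, v = BBv K M N i) ↔ v.2 = K - M - N ∧ M + N - K + 1 ≤ v.1 ∧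
      v.1 < M + N - K + 1 + 2 * r ∧ 2 ∣ v.1 - (M + N - K + 1) := by
  constructor
  · rintro ⟨i, hi, rfl⟩
    simp only [BBv, true_and]
    omega
  · rintro ⟨h1, h2, h3, h4⟩
    exact ⟨((v.1 - (M + N - K + 1)) / 2).toNat, by omega,
      Prod.ext (by simp [BBv]; omega) (by simp [BBv]; omega)⟩

theorem exists_eq_RBv_iff {K L M N r : ℕ} {v : V} :
    (∃ i < r, v = RBv K L M N i) ↔
      v.1 - v.2 = 2 * M + 2 * L + 1 ∧ K - M - N ≤ v.2 ∧ v.2 < K - M - N + r := by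
  constructor
  · rintro ⟨i, hi, rfl⟩
    simp only [RBv]
    omega
  · rintro ⟨h1, h2, h3⟩
    exact ⟨(v.2 - (K - M - N)).toNat, by omega,
      Prod.ext (by simp [RBv]; omega) (by simp [RBv]; omega)⟩

theorem LTv_injective : LTv.Injective := fun i j h => by
  simpa [LTv] using congrArg Prod.fst h

theorem TTv_injective (K : ℕ) : (TTv K).Injective := fun i j h => by
  simpa [TTv] using congrArg Prod.fst h

theorem RTv_injective (K L : ℕ) : (RTv K L).Injective := fun i j h => by
  simpa [RTv] using congrArg Prod.fst h

theorem LBv_injective : LBv.Injective := fun i j h => by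
  simpa [LBv] using congrArg Prod.fst h

theorem BBv_injective (K M N : ℕ) : (BBv K M N).Injective := fun i j h => by
  simpa [BBv] using congrArg Prod.fst h

theorem RBv_injective (K L M N : ℕ) : (RBv K L M N).Injective := fun i j h => by
  simpa [RBv] using congrArg Prod.fst h

def IsDistinguished (K L M N : ℕ) (v : V) : Prop := inLRset K L M N v ∨ inTBset K L M N v

theorem isDistinguished_iff {K L M N : ℕ} {v : V} :
    IsDistinguished K L M N v ↔
      (v.2 = v.1 ∧ 0 ≤ v.1 ∧ v.1 < K) ∨
      (v.2 = -v.1 - 1 ∧ 0 ≤ v.1 ∧ v.1 < ((M + N - K : ℕ) : ℤ)) ∨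
      (v.1 + v.2 = 2 * K + 2 * L ∧ K - M ≤ v.2 ∧ v.2 ≤ K - 1) ∨
      (v.1 - v.2 = 2 * M + 2 * L + 1 ∧ K - M - N ≤ v.2 ∧ v.2 < K - M - N + N) ∨
      (v.2 = K - 1 ∧ K + 1 ≤ v.1 ∧ v.1 < K + 1 + 2 * L ∧ 2 ∣ v.1 - K - 1) ∨
      (v.2 = K - M - N ∧ M + N - K + 1 ≤ v.1 ∧
        v.1 < M + N - K + 1 + 2 * ((K + L - N : ℕ) : ℤ) ∧ 2 ∣ v.1 - (M + N - K + 1)) := by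
  simp only [IsDistinguished, inLRset, inTBset, inLT, inLB, inRT, inRB, inTT, inBB,
    exists_eq_LTv_iff, exists_eq_LBv_iff, exists_eq_RTv_iff, exists_eq_RBv_iff, exists_eq_TTv_iff,
    exists_eq_BBv_iff, or_assoc]

def vertexFinset (K L M N : ℕ) : Finset V :=
  (Finset.Icc (-(K : ℤ)) (K + 2 * L + M + N) ×ˢ Finset.Icc ((K : ℤ) - M - N) (K - 1)).filter
    (inH K L M N)

theorem mem_vertexFinset {K L M N : ℕ} {v : V} : v ∈ vertexFinset K L M N ↔ inH K L M N v := by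
  simp only [vertexFinset, Finset.mem_filter, Finset.mem_product, Finset.mem_Icc,
    and_iff_right_iff_imp, inH]
  omega

end Vertices

section Inner

variable {K L M N : ℕ}

def IsInner (K L M N : ℕ) (v : V) : Prop := inH K L M N v ∧ ¬ IsDistinguished K L M N v

theorem IsInner.shift_down {v : V} (hv : IsInner K L M N v) (hodd : ¬ 2 ∣ v.1 + v.2) :
    IsInner K L M N (v.1, v.2 - 1) := by
  obtain ⟨hH, hd⟩ := hv
  have hLB : ¬ inLB K M N v := fun h => hd (Or.inl (Or.inr (Or.inl h)))
  have hRB : ¬ inRB K L M N v := fun h => hd (Or.inl (Or.inr (Or.inr (Or.inr h))))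
  have hBB : ¬ inBB K L M N v := fun h => hd (Or.inr (Or.inr h))
  rw [inLB, exists_eq_LBv_iff] at hLB
  rw [inRB, exists_eq_RBv_iff] at hRB
  rw [inBB, exists_eq_BBv_iff] at hBB
  unfold inH at hH
  refine ⟨by unfold inH; omega, fun hd' => ?_⟩
  rw [isDistinguished_iff] at hd'
  omega

theorem IsInner.shift_up {v : V} (hv : IsInner K L M N v) (heven : 2 ∣ v.1 + v.2) :
    IsInner K L M N (v.1, v.2 + 1) := by
  obtain ⟨hH, hd⟩ := hv
  have hLT : ¬ inLT K v := fun h => hd (Or.inl (Or.inl h))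
  have hRT : ¬ inRT K L M v := fun h => hd (Or.inl (Or.inr (Or.inr (Or.inl h))))
  have hTT : ¬ inTT K L v := fun h => hd (Or.inr (Or.inl h))
  rw [inLT, exists_eq_LTv_iff] at hLT
  rw [inRT, exists_eq_RTv_iff] at hRT
  rw [inTT, exists_eq_TTv_iff] at hTT
  unfold inH at hH
  refine ⟨by unfold inH; omega, fun hd' => ?_⟩
  rw [isDistinguished_iff] at hd'
  omega

theorem card_inner_eq_of_shift {p q : V → Prop} (hpq : ∀ v, p v ↔ q (v.1, v.2 - 1))
    (hp : ∀ v, p v → ¬ 2 ∣ v.1 + v.2) :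
    ((vertexFinset K L M N).filter (fun v => p v ∧ ¬ IsDistinguished K L M N v)).card
      = ((vertexFinset K L M N).filter (fun v => q v ∧ ¬ IsDistinguished K L M N v)).card := by
  refine Finset.card_nbij' (fun v => (v.1, v.2 - 1)) (fun v => (v.1, v.2 + 1)) ?_ ?_
    (fun v _ => by simp) (fun v _ => by simp)
  · rintro v hv
    simp only [Finset.mem_coe, Finset.mem_filter, mem_vertexFinset] at hv ⊢
    have hw := IsInner.shift_down ⟨hv.1, hv.2.2⟩ (hp v hv.2.1)
    exact ⟨hw.1, (hpq v).1 hv.2.1, hw.2⟩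
  · rintro w hw
    simp only [Finset.mem_coe, Finset.mem_filter, mem_vertexFinset] at hw ⊢
    have hpw : p (w.1, w.2 + 1) := (hpq _).2 (by simpa using hw.2.1)
    have hv := IsInner.shift_up ⟨hw.1, hw.2.2⟩ (by have := hp _ hpw; simp only at this; omega)
    exact ⟨hv.1, hpw, hv.2⟩

end Inner

theorem eq_ite_of_le_one {n : ℕ} {p : Prop} [Decidable p] (hn : n ≤ 1) (hp : p ↔ n = 1) :
    n = if p then 1 else 0 := by
  split_ifs with h
  · exact hp.1 h
  · exact Nat.lt_one_iff.1 (lt_of_le_of_ne hn (mt hp.2 h))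

namespace OHFPL

variable {K L M N : ℕ} (f : OHFPL K L M N)

theorem ndeg_UAdj_eq (v : V) : ndeg (UAdj f.E) v = outdeg f.E v + indeg f.E v := by
  simp only [ndeg, outdeg, indeg, UAdj]
  rw [← Finset.card_union_of_disjoint (Finset.disjoint_filter.2 fun w _ => f.antisymm v w),
    ← Finset.filter_or]
  congr 2

theorem outdeg_add_indeg_le_one {v : V} (hv : inLRset K L M N v) :
    outdeg f.E v + indeg f.E v ≤ 1 :=
  f.ndeg_UAdj_eq v ▸ f.degLR v hv

theorem outdeg_add_indeg_eq_one {v : V} (hv : inTBset K L M N v) :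
    outdeg f.E v + indeg f.E v = 1 :=
  f.ndeg_UAdj_eq v ▸ f.degTB v hv

theorem indeg_eq_zero_of_inLeft {v : V} (hv : inLeft K M N v) : indeg f.E v = 0 :=
  ndeg_eq_zero fun w => f.outL v hv w

theorem outdeg_eq_zero_of_notMem {v : V} (hv : v ∉ vertexFinset K L M N) : outdeg f.E v = 0 :=
  ndeg_eq_zero fun w h => hv (mem_vertexFinset.2 (f.valid v w h).1)

theorem indeg_eq_zero_of_notMem {v : V} (hv : v ∉ vertexFinset K L M N) : indeg f.E v = 0 :=
  ndeg_eq_zero fun w h => hv (mem_vertexFinset.2 (f.valid w v h).2.1)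

theorem sum_outdeg_le_sum_indeg {P Q : V → Prop}
    (hQP : ∀ v w, latAdj v w → Q v → P w) :
    ∑ v ∈ (vertexFinset K L M N).filter Q, outdeg f.E v
      ≤ ∑ w ∈ (vertexFinset K L M N).filter P, indeg f.E w :=
  sum_outdeg_filter_le_sum_indeg_filter (fun v w h => ⟨mem_vertexFinset.2 (f.valid v w h).1,
    mem_vertexFinset.2 (f.valid v w h).2.1, (f.valid v w h).2.2⟩)
    fun v w h => hQP v w (f.valid v w h).2.2

theorem indeg_eq_one_and_outdeg_eq_one {v : V} (hv : v ∈ vertexFinset K L M N)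
    (hd : ¬ IsDistinguished K L M N v) : indeg f.E v = 1 ∧ outdeg f.E v = 1 :=
  f.flow v (f.degIn v (mem_vertexFinset.1 hv) (fun h => hd (Or.inl h)) fun h => hd (Or.inr h))

theorem sum_outdeg_inner (p : V → Prop) :
    ∑ v ∈ (vertexFinset K L M N).filter (fun v => p v ∧ ¬ IsDistinguished K L M N v), outdeg f.E v
      = ((vertexFinset K L M N).filter (fun v => p v ∧ ¬ IsDistinguished K L M N v)).card := by
  rw [Finset.card_eq_sum_ones]
  refine Finset.sum_congr rfl fun v hv => ?_
  rw [Finset.mem_filter] at hv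
  exact (f.indeg_eq_one_and_outdeg_eq_one hv.1 hv.2.2).2

theorem sum_indeg_inner (p : V → Prop) :
    ∑ v ∈ (vertexFinset K L M N).filter (fun v => p v ∧ ¬ IsDistinguished K L M N v), indeg f.E v
      = ((vertexFinset K L M N).filter (fun v => p v ∧ ¬ IsDistinguished K L M N v)).card := by
  rw [Finset.card_eq_sum_ones]
  refine Finset.sum_congr rfl fun v hv => ?_
  rw [Finset.mem_filter] at hv
  exact (f.indeg_eq_one_and_outdeg_eq_one hv.1 hv.2.2).1

variable {f} {lT t rT rB b lB : Word}

theorem outdeg_LTv (hOB : OBoundary f lT t rT rB b lB) {i : ℕ} (hi : i < K) :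
    outdeg f.E (LTv i) = if lT.getD i false = true then 1 else 0 :=
  eq_ite_of_le_one (by have := f.outdeg_add_indeg_le_one (Or.inl ⟨i, hi, rfl⟩); omega)
    (hOB.1 i hi)

theorem outdeg_TTv (hOB : OBoundary f lT t rT rB b lB) {i : ℕ} (hi : i < L) :
    outdeg f.E (TTv K i) = if t.getD i false = true then 1 else 0 := by
  have := f.outdeg_add_indeg_eq_one (Or.inl ⟨i, hi, rfl⟩)
  exact eq_ite_of_le_one (by omega) (by rw [← Bool.not_eq_false, hOB.2.1 i hi]; omega)

theorem indeg_TTv (hOB : OBoundary f lT t rT rB b lB) {i : ℕ} (hi : i < L) :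
    indeg f.E (TTv K i) = if t.getD i false = false then 1 else 0 :=
  eq_ite_of_le_one (by have := f.outdeg_add_indeg_eq_one (Or.inl ⟨i, hi, rfl⟩); omega)
    (hOB.2.1 i hi)

theorem indeg_RTv (hOB : OBoundary f lT t rT rB b lB) {i : ℕ} (hi : i < M) :
    indeg f.E (RTv K L i) = if rT.getD i false = false then 1 else 0 :=
  eq_ite_of_le_one
    (by have := f.outdeg_add_indeg_le_one (Or.inr (Or.inr (Or.inl ⟨i, hi, rfl⟩))); omega)
    (hOB.2.2.1 i hi)

theorem indeg_RBv (hOB : OBoundary f lT t rT rB b lB) {i : ℕ} (hi : i < N) :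
    indeg f.E (RBv K L M N i) = if rB.getD i false = true then 1 else 0 :=
  eq_ite_of_le_one
    (by have := f.outdeg_add_indeg_le_one (Or.inr (Or.inr (Or.inr ⟨i, hi, rfl⟩))); omega)
    (hOB.2.2.2.1 i hi)

theorem indeg_BBv (hOB : OBoundary f lT t rT rB b lB) {i : ℕ} (hi : i < K + L - N) :
    indeg f.E (BBv K M N i) = if b.getD i false = true then 1 else 0 :=
  eq_ite_of_le_one (by have := f.outdeg_add_indeg_eq_one (Or.inr ⟨i, hi, rfl⟩); omega)
    (hOB.2.2.2.2.1 i hi)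

theorem outdeg_BBv (hOB : OBoundary f lT t rT rB b lB) {i : ℕ} (hi : i < K + L - N) :
    outdeg f.E (BBv K M N i) = if b.getD i false = false then 1 else 0 := by
  have := f.outdeg_add_indeg_eq_one (Or.inr ⟨i, hi, rfl⟩)
  exact eq_ite_of_le_one (by omega) (by rw [← Bool.not_eq_true, hOB.2.2.2.2.1 i hi]; omega)

theorem outdeg_LBv (hOB : OBoundary f lT t rT rB b lB) {i : ℕ} (hi : i < M + N - K) :
    outdeg f.E (LBv i) = if lB.getD i false = false then 1 else 0 :=
  eq_ite_of_le_one
    (by have := f.outdeg_add_indeg_le_one (Or.inr (Or.inl ⟨i, hi, rfl⟩)); omega)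
    (hOB.2.2.2.2.2 i hi)

end OHFPL

section Diagonals

variable {K L M N : ℕ}

def diagEven (m : ℕ) (v : V) : Prop := 2 ∣ v.1 + v.2 ∧ v.1 + v.2 ≤ 2 * (m : ℤ) - 2

def diagOdd (m : ℕ) (v : V) : Prop := ¬ 2 ∣ v.1 + v.2 ∧ v.1 + v.2 ≤ 2 * (m : ℤ) - 1

theorem diagOdd_of_diagEven {m : ℕ} {v w : V} (hvw : latAdj v w) (hv : diagEven m v) :
    diagOdd m w := by
  unfold latAdj at hvw
  unfold diagEven at hv
  unfold diagOdd
  omega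

theorem diagEven_iff_inner_or_LT_or_TT {m : ℕ} (hm : m ≤ K + L) (v : V) :
    diagEven m v ↔ (diagEven m v ∧ ¬ IsDistinguished K L M N v) ∨
      ((∃ i < min m K, v = LTv i) ∨ (∃ i < min (m - K) L, v = TTv K i)) := by
  refine ⟨fun hv => ?_, ?_⟩
  · by_cases hd : IsDistinguished K L M N v
    · rw [isDistinguished_iff] at hd
      rw [exists_eq_LTv_iff, exists_eq_TTv_iff]
      unfold diagEven at hv
      omega
    · exact Or.inl ⟨hv, hd⟩
  · rintro (h | ⟨i, hi, rfl⟩ | ⟨i, hi, rfl⟩)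
    · exact h.1
    · simp only [diagEven, LTv]
      omega
    · simp only [diagEven, TTv]
      omega

theorem diagOdd_iff_inner_or_LB_or_BB_or_RB {m : ℕ} (hNKL : N ≤ K + L) (v : V) :
    diagOdd m v ↔ (diagOdd m v ∧ ¬ IsDistinguished K L M N v) ∨ (inLB K M N v ∨
      ((∃ i < min m (K + L - N), v = BBv K M N i) ∨
        (∃ i < min (m - (K + L - N)) N, v = RBv K L M N i))) := by
  refine ⟨fun hv => ?_, ?_⟩
  · by_cases hd : IsDistinguished K L M N v
    · rw [isDistinguished_iff] at hd
      rw [inLB, exists_eq_LBv_iff, exists_eq_BBv_iff, exists_eq_RBv_iff]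
      unfold diagOdd at hv
      omega
    · exact Or.inl ⟨hv, hd⟩
  · rintro (h | ⟨i, hi, rfl⟩ | ⟨i, hi, rfl⟩ | ⟨i, hi, rfl⟩)
    · exact h.1
    · simp only [diagOdd, LBv]
      omega
    · simp only [diagOdd, BBv]
      omega
    · simp only [diagOdd, RBv]
      omega

theorem card_inner_diagOdd_eq (m : ℕ) :
    ((vertexFinset K L M N).filter (fun v => diagOdd m v ∧ ¬ IsDistinguished K L M N v)).card
      = ((vertexFinset K L M N).filter
          (fun v => diagEven m v ∧ ¬ IsDistinguished K L M N v)).card :=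
  card_inner_eq_of_shift (fun v => by simp only [diagOdd, diagEven]; omega)
    fun v hv => by unfold diagOdd at hv; omega

end Diagonals

section Antidiagonals

variable {K L M N : ℕ}

def antidiagOdd (m : ℕ) (v : V) : Prop := ¬ 2 ∣ v.1 - v.2 ∧ v.1 - v.2 ≤ 2 * (m : ℤ) - 1

def antidiagEven (m : ℕ) (v : V) : Prop := 2 ∣ v.1 - v.2 ∧ v.1 - v.2 ≤ 2 * (m : ℤ)

theorem antidiagEven_of_antidiagOdd {m : ℕ} {v w : V} (hvw : latAdj v w) (hv : antidiagOdd m v) :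
    antidiagEven m w := by
  unfold latAdj at hvw
  unfold antidiagOdd at hv
  unfold antidiagEven
  omega

theorem antidiagOdd_iff_inner_or_LB_or_BB {m : ℕ} (hKMN : K ≤ M + N) (hm : m ≤ M + L) (v : V) :
    antidiagOdd m v ↔ (antidiagOdd m v ∧ ¬ IsDistinguished K L M N v) ∨
      ((∃ i < min m (M + N - K), v = LBv i) ∨
        (∃ i < min (m - (M + N - K)) (K + L - N), v = BBv K M N i)) := by
  refine ⟨fun hv => ?_, ?_⟩
  · by_cases hd : IsDistinguished K L M N v
    · rw [isDistinguished_iff] at hd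
      rw [exists_eq_LBv_iff, exists_eq_BBv_iff]
      unfold antidiagOdd at hv
      omega
    · exact Or.inl ⟨hv, hd⟩
  · rintro (h | ⟨i, hi, rfl⟩ | ⟨i, hi, rfl⟩)
    · exact h.1
    · simp only [antidiagOdd, LBv]
      omega
    · simp only [antidiagOdd, BBv]
      omega

theorem antidiagEven_iff_inner_or_LT_or_TT_or_RT {m : ℕ} (v : V) :
    antidiagEven m v ↔ (antidiagEven m v ∧ ¬ IsDistinguished K L M N v) ∨ (inLT K v ∨
      ((∃ i < min m L, v = TTv K i) ∨ (∃ i < min (m - L) M, v = RTv K L i))) := by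
  refine ⟨fun hv => ?_, ?_⟩
  · by_cases hd : IsDistinguished K L M N v
    · rw [isDistinguished_iff] at hd
      rw [inLT, exists_eq_LTv_iff, exists_eq_TTv_iff, exists_eq_RTv_iff]
      unfold antidiagEven at hv
      omega
    · exact Or.inl ⟨hv, hd⟩
  · rintro (h | ⟨i, hi, rfl⟩ | ⟨i, hi, rfl⟩ | ⟨i, hi, rfl⟩)
    · exact h.1
    · simp only [antidiagEven, LTv]
      omega
    · simp only [antidiagEven, TTv]
      omega
    · simp only [antidiagEven, RTv]
      omega

theorem card_inner_antidiagOdd_eq (m : ℕ) :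
    ((vertexFinset K L M N).filter
        (fun v => antidiagOdd m v ∧ ¬ IsDistinguished K L M N v)).card
      = ((vertexFinset K L M N).filter
          (fun v => antidiagEven m v ∧ ¬ IsDistinguished K L M N v)).card :=
  card_inner_eq_of_shift (fun v => by simp only [antidiagOdd, antidiagEven]; omega)
    fun v hv => by unfold antidiagOdd at hv; omega

end Antidiagonals

namespace OHFPL

variable {K L M N : ℕ} {f : OHFPL K L M N} {lT t rT rB b lB : Word}

theorem sum_outdeg_diagEven (hOB : OBoundary f lT t rT rB b lB) (hlT : lT.length = K)
    (ht : t.length = L) {m : ℕ} (hm : m ≤ K + L) :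
    ∑ v ∈ (vertexFinset K L M N).filter (diagEven m), outdeg f.E v
      = ((vertexFinset K L M N).filter
          (fun v => diagEven m v ∧ ¬ IsDistinguished K L M N v)).card
        + ((lT.take m).count true + (t.take (m - K)).count true) := by
  have hinner : ∀ v, diagEven m v ∧ ¬ IsDistinguished K L M N v →
      ¬ ((∃ i < min m K, v = LTv i) ∨ (∃ i < min (m - K) L, v = TTv K i)) := by
    rintro v ⟨-, hd⟩ (⟨i, hi, rfl⟩ | ⟨i, hi, rfl⟩)
    exacts [hd (Or.inl (Or.inl ⟨i, by omega, rfl⟩)), hd (Or.inr (Or.inl ⟨i, by omega, rfl⟩))]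
  have hLT_TT : ∀ v, (∃ i < min m K, v = LTv i) → ¬ ∃ i < min (m - K) L, v = TTv K i := by
    rintro v ⟨i, hi, rfl⟩ ⟨j, hj, h⟩
    simp only [LTv, TTv, Prod.mk.injEq] at h
    omega
  rw [sum_filter_eq_add_of_iff_or (diagEven_iff_inner_or_LT_or_TT hm) hinner,
    sum_filter_eq_add_of_iff_or (fun _ => Iff.rfl) hLT_TT, f.sum_outdeg_inner,
    sum_filter_exists_eq_sum_range LTv_injective fun _ => f.outdeg_eq_zero_of_notMem,
    sum_filter_exists_eq_sum_range (TTv_injective K) fun _ => f.outdeg_eq_zero_of_notMem,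
    sum_range_eq_count_take hlT true (fun i hi => outdeg_LTv hOB hi),
    sum_range_eq_count_take ht true (fun i hi => outdeg_TTv hOB hi)]

theorem sum_indeg_diagOdd (hOB : OBoundary f lT t rT rB b lB) (hNKL : N ≤ K + L)
    (hb : b.length = K + L - N) (hrB : rB.length = N) (m : ℕ) :
    ∑ v ∈ (vertexFinset K L M N).filter (diagOdd m), indeg f.E v
      = ((vertexFinset K L M N).filter
          (fun v => diagOdd m v ∧ ¬ IsDistinguished K L M N v)).card
        + ((b.take m).count true + (rB.take (m - (K + L - N))).count true) := by
  have hinner : ∀ v, diagOdd m v ∧ ¬ IsDistinguished K L M N v → ¬ (inLB K M N v ∨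
      ((∃ i < min m (K + L - N), v = BBv K M N i) ∨
        (∃ i < min (m - (K + L - N)) N, v = RBv K L M N i))) := by
    rintro v ⟨-, hd⟩ (h | ⟨i, hi, rfl⟩ | ⟨i, hi, rfl⟩)
    exacts [hd (Or.inl (Or.inr (Or.inl h))), hd (Or.inr (Or.inr ⟨i, by omega, rfl⟩)),
      hd (Or.inl (Or.inr (Or.inr (Or.inr ⟨i, by omega, rfl⟩))))]
  have hLB : ∀ v, inLB K M N v → ¬ ((∃ i < min m (K + L - N), v = BBv K M N i) ∨
      (∃ i < min (m - (K + L - N)) N, v = RBv K L M N i)) := by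
    rintro v ⟨i, hi, rfl⟩ (⟨j, hj, h⟩ | ⟨j, hj, h⟩) <;>
    · simp only [LBv, BBv, RBv, Prod.mk.injEq] at h
      omega
  have hBB_RB : ∀ v, (∃ i < min m (K + L - N), v = BBv K M N i) →
      ¬ ∃ i < min (m - (K + L - N)) N, v = RBv K L M N i := by
    rintro v ⟨i, hi, rfl⟩ ⟨j, hj, h⟩
    simp only [BBv, RBv, Prod.mk.injEq] at h
    omega
  rw [sum_filter_eq_add_of_iff_or (diagOdd_iff_inner_or_LB_or_BB_or_RB hNKL) hinner,
    sum_filter_eq_add_of_iff_or (fun _ => Iff.rfl) hLB,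
    sum_filter_eq_add_of_iff_or (fun _ => Iff.rfl) hBB_RB, f.sum_indeg_inner,
    Finset.sum_eq_zero fun v hv => f.indeg_eq_zero_of_inLeft (Or.inr (Finset.mem_filter.1 hv).2),
    zero_add,
    sum_filter_exists_eq_sum_range (BBv_injective K M N) fun _ => f.indeg_eq_zero_of_notMem,
    sum_filter_exists_eq_sum_range (RBv_injective K L M N) fun _ => f.indeg_eq_zero_of_notMem,
    sum_range_eq_count_take hb true (fun i hi => indeg_BBv hOB hi),
    sum_range_eq_count_take hrB true (fun i hi => indeg_RBv hOB hi)]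

theorem sum_outdeg_antidiagOdd (hOB : OBoundary f lT t rT rB b lB) (hKMN : K ≤ M + N)
    (hlB : lB.length = M + N - K) (hb : b.length = K + L - N) {m : ℕ} (hm : m ≤ M + L) :
    ∑ v ∈ (vertexFinset K L M N).filter (antidiagOdd m), outdeg f.E v
      = ((vertexFinset K L M N).filter
          (fun v => antidiagOdd m v ∧ ¬ IsDistinguished K L M N v)).card
        + ((lB.take m).count false + (b.take (m - (M + N - K))).count false) := by
  have hinner : ∀ v, antidiagOdd m v ∧ ¬ IsDistinguished K L M N v →
      ¬ ((∃ i < min m (M + N - K), v = LBv i) ∨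
        (∃ i < min (m - (M + N - K)) (K + L - N), v = BBv K M N i)) := by
    rintro v ⟨-, hd⟩ (⟨i, hi, rfl⟩ | ⟨i, hi, rfl⟩)
    exacts [hd (Or.inl (Or.inr (Or.inl ⟨i, by omega, rfl⟩))),
      hd (Or.inr (Or.inr ⟨i, by omega, rfl⟩))]
  have hLB_BB : ∀ v, (∃ i < min m (M + N - K), v = LBv i) →
      ¬ ∃ i < min (m - (M + N - K)) (K + L - N), v = BBv K M N i := by
    rintro v ⟨i, hi, rfl⟩ ⟨j, hj, h⟩
    simp only [LBv, BBv, Prod.mk.injEq] at h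
    omega
  rw [sum_filter_eq_add_of_iff_or (antidiagOdd_iff_inner_or_LB_or_BB hKMN hm) hinner,
    sum_filter_eq_add_of_iff_or (fun _ => Iff.rfl) hLB_BB, f.sum_outdeg_inner,
    sum_filter_exists_eq_sum_range LBv_injective fun _ => f.outdeg_eq_zero_of_notMem,
    sum_filter_exists_eq_sum_range (BBv_injective K M N) fun _ => f.outdeg_eq_zero_of_notMem,
    sum_range_eq_count_take hlB false (fun i hi => outdeg_LBv hOB hi),
    sum_range_eq_count_take hb false (fun i hi => outdeg_BBv hOB hi)]

theorem sum_indeg_antidiagEven (hOB : OBoundary f lT t rT rB b lB) (ht : t.length = L)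
    (hrT : rT.length = M) (m : ℕ) :
    ∑ v ∈ (vertexFinset K L M N).filter (antidiagEven m), indeg f.E v
      = ((vertexFinset K L M N).filter
          (fun v => antidiagEven m v ∧ ¬ IsDistinguished K L M N v)).card
        + ((t.take m).count false + (rT.take (m - L)).count false) := by
  have hinner : ∀ v, antidiagEven m v ∧ ¬ IsDistinguished K L M N v → ¬ (inLT K v ∨
      ((∃ i < min m L, v = TTv K i) ∨ (∃ i < min (m - L) M, v = RTv K L i))) := by
    rintro v ⟨-, hd⟩ (h | ⟨i, hi, rfl⟩ | ⟨i, hi, rfl⟩)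
    exacts [hd (Or.inl (Or.inl h)), hd (Or.inr (Or.inl ⟨i, by omega, rfl⟩)),
      hd (Or.inl (Or.inr (Or.inr (Or.inl ⟨i, by omega, rfl⟩))))]
  have hLT : ∀ v, inLT K v → ¬ ((∃ i < min m L, v = TTv K i) ∨
      (∃ i < min (m - L) M, v = RTv K L i)) := by
    rintro v ⟨i, hi, rfl⟩ (⟨j, hj, h⟩ | ⟨j, hj, h⟩) <;>
    · simp only [LTv, TTv, RTv, Prod.mk.injEq] at h
      omega
  have hTT_RT : ∀ v, (∃ i < min m L, v = TTv K i) → ¬ ∃ i < min (m - L) M, v = RTv K L i := by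
    rintro v ⟨i, hi, rfl⟩ ⟨j, hj, h⟩
    simp only [TTv, RTv, Prod.mk.injEq] at h
    omega
  rw [sum_filter_eq_add_of_iff_or antidiagEven_iff_inner_or_LT_or_TT_or_RT hinner,
    sum_filter_eq_add_of_iff_or (fun _ => Iff.rfl) hLT,
    sum_filter_eq_add_of_iff_or (fun _ => Iff.rfl) hTT_RT, f.sum_indeg_inner,
    Finset.sum_eq_zero fun v hv => f.indeg_eq_zero_of_inLeft (Or.inl (Finset.mem_filter.1 hv).2),
    zero_add,
    sum_filter_exists_eq_sum_range (TTv_injective K) fun _ => f.indeg_eq_zero_of_notMem,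
    sum_filter_exists_eq_sum_range (RTv_injective K L) fun _ => f.indeg_eq_zero_of_notMem,
    sum_range_eq_count_take ht false (fun i hi => indeg_TTv hOB hi),
    sum_range_eq_count_take hrT false (fun i hi => indeg_RTv hOB hi)]

theorem count_true_take_le (hOB : OBoundary f lT t rT rB b lB) (hNKL : N ≤ K + L)
    (hlT : lT.length = K) (ht : t.length = L) (hb : b.length = K + L - N)
    (hrB : rB.length = N) {m : ℕ} (hm : m ≤ K + L) :
    (lT.take m).count true + (t.take (m - K)).count true
      ≤ (b.take m).count true + (rB.take (m - (K + L - N))).count true := by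
  have hflow := f.sum_outdeg_le_sum_indeg fun v w => diagOdd_of_diagEven (m := m)
  rw [sum_outdeg_diagEven hOB hlT ht hm, sum_indeg_diagOdd hOB hNKL hb hrB,
    card_inner_diagOdd_eq] at hflow
  omega

theorem count_false_take_le (hOB : OBoundary f lT t rT rB b lB) (hKMN : K ≤ M + N)
    (ht : t.length = L) (hrT : rT.length = M) (hb : b.length = K + L - N)
    (hlB : lB.length = M + N - K) {m : ℕ} (hm : m ≤ M + L) :
    (lB.take m).count false + (b.take (m - (M + N - K))).count false
      ≤ (t.take m).count false + (rT.take (m - L)).count false := by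
  have hflow := f.sum_outdeg_le_sum_indeg fun v w => antidiagEven_of_antidiagOdd (m := m)
  rw [sum_outdeg_antidiagOdd hOB hKMN hlB hb hm, sum_indeg_antidiagEven hOB ht hrT,
    card_inner_antidiagOdd_eq] at hflow
  omega

end OHFPL

/-- If there exists an oriented HFPL with boundary
`(l_T,t,r_T;r_B,b,l_B)`, then `l_T t ≤ b r_B` and `t r_T ≤ l_B b`. -/
theorem oriented_HFPL_boundary_dominance
    (K L M N : ℕ) (hKMN : K ≤ M + N) (hNKL : N ≤ K + L)
    (lT t rT rB b lB : Word)
    (hlT : lT.length = K) (ht : t.length = L) (hrT : rT.length = M)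
    (hrB : rB.length = N) (hb : b.length = K + L - N) (hlB : lB.length = M + N - K)
    (hpos : 0 < hvec K L M N lT t rT rB b lB) :
    wordLE (lT ++ t) (b ++ rB) ∧ wordLE (t ++ rT) (lB ++ b) := by
  obtain ⟨⟨f, hOB⟩⟩ := (Nat.card_pos_iff.1 hpos).1
  refine ⟨wordLE_of_forall_le_length (by simp only [List.length_append]; omega) fun m hm => ?_,
    wordLE_of_forall_count_false_le (by simp only [List.length_append]; omega) fun m hm => ?_⟩
  · rw [List.take_append, List.take_append, List.count_append, List.count_append, hlT, hb]
    exact f.count_true_take_le hOB hNKL hlT ht hb hrB (by simpa [hlT, ht] using hm)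
  · rw [List.take_append, List.take_append, List.count_append, List.count_append, ht, hlB]
    exact f.count_false_take_le hOB hKMN ht hrT hb hlB (by simpa [ht, hrT, add_comm] using hm)

end
end HFPLpaper2014
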